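/- For a path P_n with n ≥ 3, the Roman bondage number b_R(P_n) equals 1 if n ≡ 0 or 1 (mod 3), and equals 2 if n ≡ 2 (mod 3). -/

import Mathlib

open SimpleGraph Finset

/-- A Roman dominating function: `f : V → ℕ` taking values in `{0,1,2}` such that
every vertex with value `0` has a neighbor with value `2`. -/
def IsRDF {V : Type*} (G : SimpleGraph V) (f : V → ℕ) : Prop :=
  (∀ v, f v ≤ 2) ∧ ∀ v, f v = 0 → ∃ u, G.Adj v u ∧ f u = 2

/-- The Roman domination number: minimum weight of a Roman dominating function. -/
noncomputable def romanDomNum {V : Type*} (G : SimpleGraph V) [Fintype V] : ℕ :=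
  sInf {w | ∃ f : V → ℕ, IsRDF G f ∧ ∑ v, f v = w}

/-- The Roman bondage number: minimum number of edges whose removal increases
the Roman domination number (`⊤` if no such edge set exists). -/
noncomputable def romanBondage {V : Type*} (G : SimpleGraph V) [Fintype V] : ℕ∞ :=
  sInf {k | ∃ B : Finset (Sym2 V), ↑B ⊆ G.edgeSet ∧ (B.card : ℕ∞) = k ∧
    romanDomNum (G.deleteEdges ↑B) > romanDomNum G}

/-- A dominating set: every vertex is in `S` or adjacent to a member of `S`. -/
def IsDomSet {V : Type*} (G : SimpleGraph V) (S : Set V) : Prop :=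
  ∀ v, v ∈ S ∨ ∃ u ∈ S, G.Adj v u

/-- The domination number: minimum size of a dominating set. -/
noncomputable def domNum {V : Type*} (G : SimpleGraph V) [Fintype V] : ℕ :=
  sInf {k | ∃ S : Finset V, IsDomSet G ↑S ∧ S.card = k}

/-- The bondage number: minimum number of edges whose removal increases
the domination number (`⊤` if no such edge set exists). -/
noncomputable def bondage {V : Type*} (G : SimpleGraph V) [Fintype V] : ℕ∞ :=
  sInf {k | ∃ B : Finset (Sym2 V), ↑B ⊆ G.edgeSet ∧ (B.card : ℕ∞) = k ∧
    domNum (G.deleteEdges ↑B) > domNum G}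

/-! Write `⌈2L/3⌉ = (2L + 2)/3` and index the vertices of `P_n` by `0, …, n - 1`.
Let `H` be `P_n` with some edges deleted. If no edge of `H` leaves a block `[a, b)` of consecutive
vertices, a Roman dominating function has weight at least `2(b - a)/3` on it: every vertex of
weight `0` in the block is adjacent to one of the at most two neighbours of a vertex of weight `2`
in the block. Conversely, putting `2` on every third vertex of each block (and `1` on a last vertex
left undominated) realises `⌈2L/3⌉` per block of length `L`; in particular `γ_R(P_n) = ⌈2n/3⌉`.
Deleting the edge `{n mod 3, n mod 3 + 1}` leaves blocks of lengths `m = n mod 3 + 1` and `n - m`,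
and `⌈2m/3⌉ + ⌈2(n - m)/3⌉ > ⌈2n/3⌉` unless `n ≡ 2 (mod 3)`. If `n ≡ 2 (mod 3)`, then
`⌈2m/3⌉ + ⌈2(n - m)/3⌉ = ⌈2n/3⌉` for every `m`, so no single edge helps, whereas deleting
`{1, 2}` and `{3, 4}` leaves blocks of lengths `2, 2, n - 4` of total weight `⌈2n/3⌉ + 1`. -/

namespace IsRDF

variable {V : Type*} [Fintype V] {G : SimpleGraph V} {f : V → ℕ}

theorem romanDomNum_le (hf : IsRDF G f) : romanDomNum G ≤ ∑ v, f v :=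
  Nat.sInf_le ⟨f, hf, rfl⟩

theorem two_mul_card_le_mul_sum [DecidableRel G.Adj] (hf : IsRDF G f) {Δ : ℕ} (hΔ : 1 ≤ Δ)
    (hdeg : ∀ v, G.degree v ≤ Δ) {S : Finset V} (hS : ∀ u v, G.Adj u v → u ∈ S → v ∈ S) :
    2 * #S ≤ (Δ + 1) * ∑ v ∈ S, f v := by
  classical
  have hmaps : ∀ v ∈ S, f v ∈ range 3 := fun v _ => mem_range.2 (Nat.lt_succ_of_le (hf.1 v))
  have hcard : #S = #{v ∈ S | f v = 0} + #{v ∈ S | f v = 1} + #{v ∈ S | f v = 2} := by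
    simp [card_eq_sum_card_fiberwise hmaps, sum_range_succ]
  have hsum : ∑ v ∈ S, f v = #{v ∈ S | f v = 1} + 2 * #{v ∈ S | f v = 2} := by
    rw [← sum_fiberwise_of_maps_to hmaps]
    have hconst : ∀ k, ∑ v ∈ {v ∈ S | f v = k}, f v = #{v ∈ S | f v = k} * k :=
      fun k => sum_const_nat fun v hv => (mem_filter.1 hv).2
    simp only [sum_range_succ, range_zero, sum_empty, hconst]
    ring
  -- charge each vertex of weight `0` to a neighbour of weight `2`, which has at most `Δ` neighbours
  have hzero : #{v ∈ S | f v = 0} ≤ Δ * #{v ∈ S | f v = 2} := by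
    choose! g hgadj hg2 using fun v (hv : v ∈ S ∧ f v = 0) => hf.2 v hv.2
    refine card_le_mul_card_image_of_maps_to (f := g) (fun v hv => ?_) Δ fun u _ => ?_
    · rw [mem_filter] at hv ⊢
      exact ⟨hS v _ (hgadj v hv) hv.1, hg2 v hv⟩
    · calc #{v ∈ {v ∈ S | f v = 0} | g v = u} ≤ #(G.neighborFinset u) := by
            refine card_le_card fun v hv => ?_
            rw [mem_filter] at hv
            rw [mem_neighborFinset, ← hv.2]
            exact (hgadj v (mem_filter.1 hv.1)).symm
        _ ≤ Δ := (card_neighborFinset_eq_degree G u).trans_le (hdeg u)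
  rw [hcard, hsum]
  nlinarith

end IsRDF

section RomanDomination

variable {V : Type*} [Fintype V] (G : SimpleGraph V)

theorem exists_isRDF_sum_eq_romanDomNum : ∃ f : V → ℕ, IsRDF G f ∧ ∑ v, f v = romanDomNum G :=
  Nat.sInf_mem (s := {w | ∃ f : V → ℕ, IsRDF G f ∧ ∑ v, f v = w})
    ⟨_, fun _ => 2, ⟨fun _ => le_rfl, fun _ h => absurd h two_ne_zero⟩, rfl⟩

variable {G}

theorem romanBondage_le_card {B : Finset (Sym2 V)} (hB : ↑B ⊆ G.edgeSet)
    (hlt : romanDomNum G < romanDomNum (G.deleteEdges ↑B)) : romanBondage G ≤ #B :=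
  sInf_le ⟨B, hB, rfl, hlt⟩

theorem le_romanBondage {k : ℕ}
    (h : ∀ B : Finset (Sym2 V), ↑B ⊆ G.edgeSet →
      romanDomNum G < romanDomNum (G.deleteEdges ↑B) → k ≤ #B) :
    (k : ℕ∞) ≤ romanBondage G :=
  le_sInf fun _ ⟨B, hB, hcard, hlt⟩ => hcard ▸ Nat.cast_le.2 (h B hB hlt)

theorem card_pos_of_romanDomNum_lt {B : Finset (Sym2 V)}
    (hlt : romanDomNum G < romanDomNum (G.deleteEdges ↑B)) : 0 < #B := by
  refine card_pos.2 (nonempty_iff_ne_empty.2 fun hB => ?_)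
  rw [hB, coe_empty, deleteEdges_empty] at hlt
  exact hlt.false

theorem one_le_romanBondage : 1 ≤ romanBondage G :=
  le_romanBondage fun _ _ hlt => card_pos_of_romanDomNum_lt hlt

theorem two_le_romanBondage
    (h : ∀ e ∈ G.edgeSet, romanDomNum (G.deleteEdges {e}) ≤ romanDomNum G) :
    2 ≤ romanBondage G := by
  refine le_romanBondage fun B hB hlt => ?_
  by_contra! hcard
  have hpos := card_pos_of_romanDomNum_lt hlt
  obtain ⟨e, rfl⟩ := card_eq_one.1 (show #B = 1 by omega)
  rw [coe_singleton] at hB hlt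
  exact (h e (hB rfl)).not_gt hlt

end RomanDomination

/-- A minimum Roman dominating function of the path on `L` vertices. -/
def pathPattern (L r : ℕ) : ℕ :=
  if r % 3 = 1 then 2 else if r + 1 = L ∧ L % 3 = 1 then 1 else 0

theorem pathPattern_le_two (L r : ℕ) : pathPattern L r ≤ 2 := by
  unfold pathPattern; split_ifs <;> omega

theorem sum_range_ite_mod_three_eq_one (M : ℕ) :
    ∑ r ∈ range M, (if r % 3 = 1 then 2 else 0) = 2 * ((M + 1) / 3) := by
  induction M with
  | zero => rfl
  | succ M ih => rw [sum_range_succ, ih]; split_ifs <;> omega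

theorem sum_range_pathPattern (L : ℕ) : ∑ r ∈ range L, pathPattern L r = (2 * L + 2) / 3 := by
  cases L with
  | zero => rfl
  | succ L =>
    have hinit : ∀ r ∈ range L, pathPattern (L + 1) r = if r % 3 = 1 then 2 else 0 := by
      intro r hr
      have := mem_range.1 hr
      unfold pathPattern; split_ifs <;> omega
    rw [sum_range_succ, sum_congr rfl hinit, sum_range_ite_mod_three_eq_one]
    unfold pathPattern; split_ifs <;> omega

theorem exists_pathPattern_eq_two_of_eq_zero {L r : ℕ} (hr : r < L) (h0 : pathPattern L r = 0) :
    ∃ s < L, (s + 1 = r ∨ r + 1 = s) ∧ pathPattern L s = 2 := by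
  unfold pathPattern at h0
  have hs : (r - 1) % 3 = 1 ∨ (r + 1) % 3 = 1 ∧ r + 1 < L := by split_ifs at h0; omega
  rcases hs with hs | ⟨hs, hsL⟩
  · exact ⟨r - 1, by omega, Or.inl (by omega), if_pos hs⟩
  · exact ⟨r + 1, hsL, Or.inr rfl, if_pos hs⟩

section PathWithCuts

variable {n : ℕ}

theorem exists_adj_eq_two_of_eq_pathPattern {H : SimpleGraph (Fin n)} {a L : ℕ} (hLn : a + L ≤ n)
    (hadj : ∀ u v : Fin n, u.val + 1 = v.val → a < v.val → v.val < a + L → H.Adj u v)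
    {f : Fin n → ℕ} (hf : ∀ v : Fin n, a ≤ v.val → v.val < a + L → f v = pathPattern L (v.val - a))
    {v : Fin n} (hav : a ≤ v.val) (hvL : v.val < a + L) (h0 : f v = 0) :
    ∃ u, H.Adj v u ∧ f u = 2 := by
  obtain ⟨s, hsL, hsv, hs2⟩ :=
    exists_pathPattern_eq_two_of_eq_zero (by omega : v.val - a < L) (hf v hav hvL ▸ h0)
  refine ⟨⟨a + s, by omega⟩, ?_, by rw [hf _ (by simp) (by simp [hsL])]; simpa using hs2⟩
  rcases hsv with hsv | hsv
  · exact (hadj _ _ (by simp; omega) (by omega) hvL).symm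
  · exact hadj _ _ (by simp; omega) (by simp; omega) (by simp; omega)

theorem romanDomNum_le_of_adj {H : SimpleGraph (Fin n)} {c : ℕ} (hcn : c ≤ n)
    (hadj : ∀ u v : Fin n, u.val + 1 = v.val → v.val ≠ c → H.Adj u v) :
    romanDomNum H ≤ (2 * c + 2) / 3 + (2 * (n - c) + 2) / 3 := by
  set g : ℕ → ℕ := fun i => if i < c then pathPattern c i else pathPattern (n - c) (i - c)
  have hrdf : IsRDF H fun v => g v := by
    refine ⟨fun v => ?_, fun v h0 => ?_⟩
    · dsimp only [g]; split_ifs <;> exact pathPattern_le_two _ _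
    · by_cases hv : v.val < c
      · exact exists_adj_eq_two_of_eq_pathPattern (a := 0) (L := c) (by omega)
          (fun x y hxy _ hy => hadj x y hxy (by omega))
          (fun w _ hw => by simp [g, show w.val < c by omega]) (Nat.zero_le _) (by omega) h0
      · exact exists_adj_eq_two_of_eq_pathPattern (a := c) (L := n - c) (by omega)
          (fun x y hxy hy _ => hadj x y hxy (by omega))
          (fun w hw _ => by simp [g, show ¬ w.val < c by omega]) (by omega) (by omega) h0
  refine hrdf.romanDomNum_le.trans_eq ?_
  rw [Fin.sum_univ_eq_sum_range g, show n = c + (n - c) by omega, sum_range_add,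
    Nat.add_sub_cancel_left, ← sum_range_pathPattern, ← sum_range_pathPattern]
  congr 1 <;> refine sum_congr rfl fun i hi => ?_ <;> have := mem_range.1 hi
  · simp [g, this]
  · simp [g]

theorem degree_le_two_of_le_pathGraph {H : SimpleGraph (Fin n)} [DecidableRel H.Adj]
    (hH : H ≤ pathGraph n) (v : Fin n) : H.degree v ≤ 2 := by
  rw [← card_neighborFinset_eq_degree]
  -- a neighbour of `v` is determined by whether it lies above `v`
  refine card_le_card_of_injOn (t := (univ : Finset Bool)) (fun w => decide (v < w))
    (fun _ _ => mem_coe.2 (mem_univ _)) fun x hx y hy hxy => ?_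
  have hx' := pathGraph_adj.1 (hH (mem_neighborFinset _ _ _ |>.1 hx))
  have hy' := pathGraph_adj.1 (hH (mem_neighborFinset _ _ _ |>.1 hy))
  simp only [decide_eq_decide, Fin.lt_def] at hxy
  exact Fin.ext (by omega)

/-- Trivially true for `c = 0` and `c = n`, so the end blocks of a path need no special case. -/
def IsCut (H : SimpleGraph (Fin n)) (c : ℕ) : Prop :=
  ∀ u v : Fin n, H.Adj u v → u.val + 1 = v.val → v.val ≠ c

theorem isCut_zero (H : SimpleGraph (Fin n)) : IsCut H 0 :=
  fun _ _ _ h => by omega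

theorem isCut_self (H : SimpleGraph (Fin n)) : IsCut H n :=
  fun _ v _ _ => v.isLt.ne

theorem isCut_deleteEdges {B : Set (Sym2 (Fin n))} {u v : Fin n} (huv : u.val + 1 = v.val)
    (hB : s(u, v) ∈ B) : IsCut ((pathGraph n).deleteEdges B) v.val := by
  intro x y hxy hxy' hyv
  obtain rfl : y = v := Fin.ext hyv
  obtain rfl : x = u := Fin.ext (by omega)
  exact (deleteEdges_adj.1 hxy).2 hB

theorem card_filter_fin_val_mem_Ico {a b : ℕ} (hbn : b ≤ n) :
    #{v : Fin n | a ≤ v.val ∧ v.val < b} = b - a := by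
  rw [← Nat.card_Ico, ← card_map Fin.valEmbedding]
  congr 1
  ext i
  simp only [mem_map, mem_filter, mem_univ, true_and, Fin.valEmbedding_apply, mem_Ico]
  exact ⟨fun ⟨v, hv, hvi⟩ => hvi ▸ hv, fun hi => ⟨⟨i, by omega⟩, hi, rfl⟩⟩

theorem sum_filter_fin_val_mem_Ico_consecutive {a b c : ℕ} (hab : a ≤ b) (hbc : b ≤ c)
    (f : Fin n → ℕ) :
    ∑ v ∈ {v : Fin n | a ≤ v.val ∧ v.val < b}, f v
      + ∑ v ∈ {v : Fin n | b ≤ v.val ∧ v.val < c}, f v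
      = ∑ v ∈ {v : Fin n | a ≤ v.val ∧ v.val < c}, f v := by
  rw [← sum_union (disjoint_filter.2 fun _ _ h h' => by omega)]
  congr 1
  ext v
  simp only [mem_union, mem_filter, mem_univ, true_and]
  omega

theorem IsRDF.two_mul_sub_le_three_mul_sum {H : SimpleGraph (Fin n)} (hH : H ≤ pathGraph n)
    {f : Fin n → ℕ} (hf : IsRDF H f) {a b : ℕ} (ha : IsCut H a) (hb : IsCut H b) (hbn : b ≤ n) :
    2 * (b - a) ≤ 3 * ∑ v ∈ {v : Fin n | a ≤ v.val ∧ v.val < b}, f v := by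
  classical
  rw [← card_filter_fin_val_mem_Ico hbn]
  refine hf.two_mul_card_le_mul_sum one_le_two (degree_le_two_of_le_pathGraph hH)
    fun u v huv hu => ?_
  simp only [mem_filter, mem_univ, true_and] at hu ⊢
  rcases pathGraph_adj.1 (hH huv) with h | h
  · have := hb u v huv h; omega
  · have := ha v u huv.symm h; omega

theorem le_romanDomNum_of_isCut {H : SimpleGraph (Fin n)} (hH : H ≤ pathGraph n) {c d : ℕ}
    (hc : IsCut H c) (hd : IsCut H d) (hcd : c ≤ d) (hdn : d ≤ n) :
    (2 * c + 2) / 3 + (2 * (d - c) + 2) / 3 + (2 * (n - d) + 2) / 3 ≤ romanDomNum H := by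
  obtain ⟨f, hf, hsum⟩ := exists_isRDF_sum_eq_romanDomNum H
  have h₁ := hf.two_mul_sub_le_three_mul_sum hH (isCut_zero H) hc (hcd.trans hdn)
  have h₂ := hf.two_mul_sub_le_three_mul_sum hH hc hd hdn
  have h₃ := hf.two_mul_sub_le_three_mul_sum hH hd (isCut_self H) le_rfl
  have hsplit : ∑ v, f v = ∑ v ∈ {v : Fin n | 0 ≤ v.val ∧ v.val < c}, f v
      + ∑ v ∈ {v : Fin n | c ≤ v.val ∧ v.val < d}, f v
      + ∑ v ∈ {v : Fin n | d ≤ v.val ∧ v.val < n}, f v := by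
    rw [sum_filter_fin_val_mem_Ico_consecutive (Nat.zero_le c) hcd,
      sum_filter_fin_val_mem_Ico_consecutive (Nat.zero_le d) hdn,
      filter_true_of_mem fun v _ => ⟨Nat.zero_le _, v.isLt⟩]
  rw [← hsum, hsplit]
  gcongr <;> omega

end PathWithCuts

theorem romanDomNum_pathGraph (n : ℕ) : romanDomNum (pathGraph n) = (2 * n + 2) / 3 := by
  apply le_antisymm
  · have := romanDomNum_le_of_adj (c := 0) (Nat.zero_le n) fun u v huv _ =>
      pathGraph_adj.2 (Or.inl huv)
    omega
  · have := le_romanDomNum_of_isCut le_rfl (isCut_zero _) (isCut_zero _) le_rfl (Nat.zero_le n)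
    omega

theorem romanDomNum_pathGraph_deleteEdges_le {n : ℕ} (hn : n % 3 = 2) {e : Sym2 (Fin n)}
    (he : e ∈ (pathGraph n).edgeSet) :
    romanDomNum ((pathGraph n).deleteEdges {e}) ≤ romanDomNum (pathGraph n) := by
  induction e using Sym2.ind with | _ u v => ?_
  wlog huv : u.val + 1 = v.val generalizing u v
  · rw [Sym2.eq_swap] at he ⊢
    exact this v u he (by have := pathGraph_adj.1 ((mem_edgeSet _).1 he); omega)
  have hadj : ∀ x y : Fin n, x.val + 1 = y.val → y.val ≠ v.val →
      ((pathGraph n).deleteEdges {s(u, v)}).Adj x y := by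
    intro x y hxy hyv
    refine deleteEdges_adj.2 ⟨pathGraph_adj.2 (Or.inl hxy), fun h => hyv ?_⟩
    rcases Sym2.eq_iff.1 h with ⟨-, rfl⟩ | ⟨rfl, rfl⟩
    · rfl
    · omega
  have := romanDomNum_le_of_adj v.isLt.le hadj
  rw [romanDomNum_pathGraph]
  omega

theorem exists_romanDomNum_pathGraph_lt_deleteEdges_card_eq_one {n : ℕ} (hn : 3 ≤ n)
    (h2 : n % 3 ≠ 2) :
    ∃ B : Finset (Sym2 (Fin n)), ↑B ⊆ (pathGraph n).edgeSet ∧ #B = 1 ∧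
      romanDomNum (pathGraph n) < romanDomNum ((pathGraph n).deleteEdges ↑B) := by
  let u : Fin n := ⟨n % 3, by omega⟩
  let v : Fin n := ⟨n % 3 + 1, by omega⟩
  have huv : u.val + 1 = v.val := rfl
  refine ⟨{s(u, v)}, by simpa using pathGraph_adj.2 (Or.inl huv), card_singleton _, ?_⟩
  have hcut := isCut_deleteEdges huv (mem_coe.2 (mem_singleton_self _))
  have := le_romanDomNum_of_isCut (deleteEdges_le _) hcut hcut le_rfl v.isLt.le
  rw [show (v : ℕ) = n % 3 + 1 from rfl] at this
  rw [romanDomNum_pathGraph]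
  omega

theorem exists_romanDomNum_pathGraph_lt_deleteEdges_card_eq_two {n : ℕ} (hn : 5 ≤ n)
    (h2 : n % 3 = 2) :
    ∃ B : Finset (Sym2 (Fin n)), ↑B ⊆ (pathGraph n).edgeSet ∧ #B = 2 ∧
      romanDomNum (pathGraph n) < romanDomNum ((pathGraph n).deleteEdges ↑B) := by
  let e₁ : Sym2 (Fin n) := s(⟨1, by omega⟩, ⟨2, by omega⟩)
  let e₂ : Sym2 (Fin n) := s(⟨3, by omega⟩, ⟨4, by omega⟩)
  refine ⟨{e₁, e₂}, ?_, card_pair (by simp [e₁, e₂]), ?_⟩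
  · simp [Set.insert_subset_iff, e₁, e₂, pathGraph_adj]
  have hcut₁ : IsCut ((pathGraph n).deleteEdges ↑({e₁, e₂} : Finset _)) 2 :=
    isCut_deleteEdges (u := ⟨1, by omega⟩) (v := ⟨2, by omega⟩) rfl (by simp [e₁])
  have hcut₂ : IsCut ((pathGraph n).deleteEdges ↑({e₁, e₂} : Finset _)) 4 :=
    isCut_deleteEdges (u := ⟨3, by omega⟩) (v := ⟨4, by omega⟩) rfl (by simp [e₂])
  have := le_romanDomNum_of_isCut (deleteEdges_le _) hcut₁ hcut₂ (by norm_num) (by omega)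
  rw [romanDomNum_pathGraph]
  omega

theorem roman_bondage_path (n : ℕ) (hn : 3 ≤ n) :
    romanBondage (pathGraph n) = if n % 3 = 2 then 2 else 1 := by
  split_ifs with h2
  · obtain ⟨B, hB, hcard, hlt⟩ :=
      exists_romanDomNum_pathGraph_lt_deleteEdges_card_eq_two (by omega) h2
    refine le_antisymm ?_ (two_le_romanBondage fun _ => romanDomNum_pathGraph_deleteEdges_le h2)
    simpa [hcard] using romanBondage_le_card hB hlt
  · obtain ⟨B, hB, hcard, hlt⟩ := exists_romanDomNum_pathGraph_lt_deleteEdges_card_eq_one hn h2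
    refine le_antisymm ?_ one_le_romanBondage
    simpa [hcard] using romanBondage_le_card hB hlt
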